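/- If f : C → D is a surjective morphism of codes, then every maximal codeword of D is the image under f of a maximal codeword of C. -/

import Mathlib

def trunk {n : ℕ} (C : Set (Finset (Fin n))) (σ : Finset (Fin n)) : Set (Finset (Fin n)) :=
  {c | c ∈ C ∧ σ ⊆ c}

def IsTrunk {n : ℕ} (C T : Set (Finset (Fin n))) : Prop :=
  T = ∅ ∨ ∃ σ : Finset (Fin n), T = trunk C σ

def IsMorphism {n m : ℕ} (C : Set (Finset (Fin n))) (D : Set (Finset (Fin m)))
    (f : Finset (Fin n) → Finset (Fin m)) : Prop :=
  (∀ c ∈ C, f c ∈ D) ∧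
  ∀ T : Set (Finset (Fin m)), IsTrunk D T → IsTrunk C {c | c ∈ C ∧ f c ∈ T}

def MaximalCodeword {n : ℕ} (C : Set (Finset (Fin n))) (c : Finset (Fin n)) : Prop :=
  c ∈ C ∧ ∀ c' ∈ C, c ⊆ c' → c = c'

/-! A trunk is an upward-closed subset of `C`; a nonempty one is finite, so it has a maximal
element, which by upward closure is a maximal codeword of `C`. For a maximal codeword `d` of `D`
the trunk `Tk_D(d)` is `{d}`, so its preimage under a morphism is a trunk of `C` mapped onto `d`;
surjectivity makes it nonempty. -/

section

variable {n : ℕ} {C T : Set (Finset (Fin n))}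

theorem trunk_subset (C : Set (Finset (Fin n))) (σ : Finset (Fin n)) : trunk C σ ⊆ C :=
  fun _ hc => hc.1

theorem IsTrunk.subset (hT : IsTrunk C T) : T ⊆ C := by
  rcases hT with rfl | ⟨σ, rfl⟩
  · exact Set.empty_subset C
  · exact trunk_subset C σ

theorem IsTrunk.mem_of_subset (hT : IsTrunk C T) {c c' : Finset (Fin n)} (hc : c ∈ T)
    (hc' : c' ∈ C) (hcc' : c ⊆ c') : c' ∈ T := by
  rcases hT with rfl | ⟨σ, rfl⟩
  · exact absurd hc (Set.notMem_empty c)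
  · exact ⟨hc', hc.2.trans hcc'⟩

theorem IsTrunk.exists_maximalCodeword (hT : IsTrunk C T) (hne : T.Nonempty) :
    ∃ c ∈ T, MaximalCodeword C c := by
  obtain ⟨c, hcT, hcmax⟩ := T.toFinite.exists_maximalFor id T hne
  refine ⟨c, hcT, hT.subset hcT, fun c' hc' hcc' => ?_⟩
  exact hcc'.antisymm (hcmax (hT.mem_of_subset hcT hc' hcc') hcc')

theorem MaximalCodeword.trunk_eq_singleton {c : Finset (Fin n)} (hc : MaximalCodeword C c) :
    trunk C c = {c} := by
  ext x
  constructor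
  · rintro ⟨hxC, hcx⟩
    exact (hc.2 x hxC hcx).symm
  · rintro rfl
    exact ⟨hc.1, subset_rfl⟩

end

theorem maximal_has_maximal_preimage {n m : ℕ} (C : Set (Finset (Fin n)))
    (D : Set (Finset (Fin m))) (f : Finset (Fin n) → Finset (Fin m))
    (hf : IsMorphism C D f) (hsurj : ∀ d ∈ D, ∃ c ∈ C, f c = d)
    (d : Finset (Fin m)) (hd : MaximalCodeword D d) :
    ∃ c : Finset (Fin n), MaximalCodeword C c ∧ f c = d := by
  have hfiber : IsTrunk C {c | c ∈ C ∧ f c ∈ trunk D d} := hf.2 _ (Or.inr ⟨d, rfl⟩)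
  rw [hd.trunk_eq_singleton] at hfiber
  obtain ⟨c₀, hc₀C, hc₀d⟩ := hsurj d hd.1
  obtain ⟨c, ⟨-, hcd⟩, hcmax⟩ := hfiber.exists_maximalCodeword ⟨c₀, hc₀C, hc₀d⟩
  exact ⟨c, hcmax, hcd⟩
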